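/- Set C = C₂ ⊗ 1 and M₁ = δ(C₂) − C₂ ⊗ 1 − 35 in U(sl₂(ℂ)) ⊗ End(ℂ⁶) (here 35 = C₂ evaluated at highest weight 5). Then (M₁² + 20M₁ − 100C)(M₁² + 52M₁ − 36C + 640)(M₁² + 68M₁ − 4C + 1152) = 0 in U(sl₂(ℂ)) ⊗ End(ℂ⁶) (all factors commute with one another). -/

import Mathlib

/-!
STATEMENT 10. With notation as in Statement 9: set `C = C₂ ⊗ 1` and
`M₁ = δ(C₂) − C₂ ⊗ 1 − 35` in `U(sl₂(ℂ)) ⊗ End(ℂ⁶)` (here `35 = C₂` evaluated at highest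
weight 5).  Then `(M₁² + 20M₁ − 100C)(M₁² + 52M₁ − 36C + 640)(M₁² + 68M₁ − 4C + 1152) = 0`.
-/

open LieAlgebra.SpecialLinear UniversalEnvelopingAlgebra
open scoped TensorProduct

set_option synthInstance.maxHeartbeats 1000000
set_option maxHeartbeats 2000000

section VecLemmas
variable {α : Type*} (a b c d e f : α)
@[simp] lemma vec6_0 : ![a,b,c,d,e,f] 0 = a := rfl
@[simp] lemma vec6_1 : ![a,b,c,d,e,f] 1 = b := rfl
@[simp] lemma vec6_2 : ![a,b,c,d,e,f] 2 = c := rfl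
@[simp] lemma vec6_3 : ![a,b,c,d,e,f] 3 = d := rfl
@[simp] lemma vec6_4 : ![a,b,c,d,e,f] 4 = e := rfl
@[simp] lemma vec6_5 : ![a,b,c,d,e,f] 5 = f := rfl
@[simp] lemma vec6_0' (h) : ![a,b,c,d,e,f] ⟨0,h⟩ = a := rfl
@[simp] lemma vec6_1' (h) : ![a,b,c,d,e,f] ⟨1,h⟩ = b := rfl
@[simp] lemma vec6_2' (h) : ![a,b,c,d,e,f] ⟨2,h⟩ = c := rfl
@[simp] lemma vec6_3' (h) : ![a,b,c,d,e,f] ⟨3,h⟩ = d := rfl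
@[simp] lemma vec6_4' (h) : ![a,b,c,d,e,f] ⟨4,h⟩ = e := rfl
@[simp] lemma vec6_5' (h) : ![a,b,c,d,e,f] ⟨5,h⟩ = f := rfl
end VecLemmas

section AuxMat
variable {A : Type*} [Ring A] [Algebra ℂ A]

def Imat6 : Matrix (Fin 6) (Fin 6) A :=
  !![(1:A),0,0,0,0,0; 0,1,0,0,0,0; 0,0,1,0,0,0; 0,0,0,1,0,0; 0,0,0,0,1,0; 0,0,0,0,0,1]

lemma Imat6_eq_one : (Imat6 : Matrix (Fin 6) (Fin 6) A) = 1 := by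
  ext i j
  fin_cases i <;> fin_cases j <;>
    (simp only [Imat6, Matrix.of_apply, Matrix.one_apply, vec6_0, vec6_1, vec6_2, vec6_3, vec6_4, vec6_5, vec6_0', vec6_1', vec6_2', vec6_3', vec6_4', vec6_5', Fin.mk.injEq] <;> norm_num)

def Nmat (F H E : A) : Matrix (Fin 6) (Fin 6) A :=
  !![(10 : ℂ) • (H), (20 : ℂ) • (F), (0 : A), (0 : A), (0 : A), (0 : A);
    (4 : ℂ) • (E), (6 : ℂ) • (H), (32 : ℂ) • (F), (0 : A), (0 : A), (0 : A);
    (0 : A), (4 : ℂ) • (E), (2 : ℂ) • (H), (36 : ℂ) • (F), (0 : A), (0 : A);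
    (0 : A), (0 : A), (4 : ℂ) • (E), (-2 : ℂ) • (H), (32 : ℂ) • (F), (0 : A);
    (0 : A), (0 : A), (0 : A), (4 : ℂ) • (E), (-6 : ℂ) • (H), (20 : ℂ) • (F);
    (0 : A), (0 : A), (0 : A), (0 : A), (4 : ℂ) • (E), (-10 : ℂ) • (H)]
def Cmat (F H E : A) : Matrix (Fin 6) (Fin 6) A :=
  !![(2 : ℂ) • (H) + (4 : ℂ) • (F * E) + (1 : ℂ) • (H * H), (0 : A), (0 : A), (0 : A), (0 : A), (0 : A);
    (0 : A), (2 : ℂ) • (H) + (4 : ℂ) • (F * E) + (1 : ℂ) • (H * H), (0 : A), (0 : A), (0 : A), (0 : A);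
    (0 : A), (0 : A), (2 : ℂ) • (H) + (4 : ℂ) • (F * E) + (1 : ℂ) • (H * H), (0 : A), (0 : A), (0 : A);
    (0 : A), (0 : A), (0 : A), (2 : ℂ) • (H) + (4 : ℂ) • (F * E) + (1 : ℂ) • (H * H), (0 : A), (0 : A);
    (0 : A), (0 : A), (0 : A), (0 : A), (2 : ℂ) • (H) + (4 : ℂ) • (F * E) + (1 : ℂ) • (H * H), (0 : A);
    (0 : A), (0 : A), (0 : A), (0 : A), (0 : A), (2 : ℂ) • (H) + (4 : ℂ) • (F * E) + (1 : ℂ) • (H * H)]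
def Smat (F H E : A) : Matrix (Fin 6) (Fin 6) A :=
  !![(80 : ℂ) • (F * E) + (100 : ℂ) • (H * H), (-400 : ℂ) • (F) + (320 : ℂ) • (F * H), (640 : ℂ) • (F * F), (0 : A), (0 : A), (0 : A);
    (-80 : ℂ) • (E) + (64 : ℂ) • (H * E), (80 : ℂ) • (H) + (208 : ℂ) • (F * E) + (36 : ℂ) • (H * H), (-384 : ℂ) • (F) + (256 : ℂ) • (F * H), (1152 : ℂ) • (F * F), (0 : A), (0 : A);
    (16 : ℂ) • (E * E), (-48 : ℂ) • (E) + (32 : ℂ) • (H * E), (128 : ℂ) • (H) + (272 : ℂ) • (F * E) + (4 : ℂ) • (H * H), (-144 : ℂ) • (F), (1152 : ℂ) • (F * F), (0 : A);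
    (0 : A), (16 : ℂ) • (E * E), (-16 : ℂ) • (E), (144 : ℂ) • (H) + (272 : ℂ) • (F * E) + (4 : ℂ) • (H * H), (128 : ℂ) • (F) + (-256 : ℂ) • (F * H), (640 : ℂ) • (F * F);
    (0 : A), (0 : A), (16 : ℂ) • (E * E), (16 : ℂ) • (E) + (-32 : ℂ) • (H * E), (128 : ℂ) • (H) + (208 : ℂ) • (F * E) + (36 : ℂ) • (H * H), (240 : ℂ) • (F) + (-320 : ℂ) • (F * H);
    (0 : A), (0 : A), (0 : A), (16 : ℂ) • (E * E), (48 : ℂ) • (E) + (-64 : ℂ) • (H * E), (80 : ℂ) • (H) + (80 : ℂ) • (F * E) + (100 : ℂ) • (H * H)]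
def Q1mat (F H E : A) : Matrix (Fin 6) (Fin 6) A :=
  !![(-320 : ℂ) • (F * E), (320 : ℂ) • (F * H), (640 : ℂ) • (F * F), (0 : A), (0 : A), (0 : A);
    (64 : ℂ) • (H * E), (-192 : ℂ) • (F * E) + (-64 : ℂ) • (H * H), (256 : ℂ) • (F) + (256 : ℂ) • (F * H), (1152 : ℂ) • (F * F), (0 : A), (0 : A);
    (16 : ℂ) • (E * E), (32 : ℂ) • (E) + (32 : ℂ) • (H * E), (-32 : ℂ) • (H) + (-128 : ℂ) • (F * E) + (-96 : ℂ) • (H * H), (576 : ℂ) • (F), (1152 : ℂ) • (F * F), (0 : A);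
    (0 : A), (16 : ℂ) • (E * E), (64 : ℂ) • (E), (-96 : ℂ) • (H) + (-128 : ℂ) • (F * E) + (-96 : ℂ) • (H * H), (768 : ℂ) • (F) + (-256 : ℂ) • (F * H), (640 : ℂ) • (F * F);
    (0 : A), (0 : A), (16 : ℂ) • (E * E), (96 : ℂ) • (E) + (-32 : ℂ) • (H * E), (-192 : ℂ) • (H) + (-192 : ℂ) • (F * E) + (-64 : ℂ) • (H * H), (640 : ℂ) • (F) + (-320 : ℂ) • (F * H);
    (0 : A), (0 : A), (0 : A), (16 : ℂ) • (E * E), (128 : ℂ) • (E) + (-64 : ℂ) • (H * E), (-320 : ℂ) • (H) + (-320 : ℂ) • (F * E)]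
def Q2mat (F H E : A) : Matrix (Fin 6) (Fin 6) A :=
  !![(640 : ℂ) • ((1 : A)) + (448 : ℂ) • (H) + (-64 : ℂ) • (F * E) + (64 : ℂ) • (H * H), (640 : ℂ) • (F) + (320 : ℂ) • (F * H), (640 : ℂ) • (F * F), (0 : A), (0 : A), (0 : A);
    (128 : ℂ) • (E) + (64 : ℂ) • (H * E), (640 : ℂ) • ((1 : A)) + (320 : ℂ) • (H) + (64 : ℂ) • (F * E), (1280 : ℂ) • (F) + (256 : ℂ) • (F * H), (1152 : ℂ) • (F * F), (0 : A), (0 : A);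
    (16 : ℂ) • (E * E), (160 : ℂ) • (E) + (32 : ℂ) • (H * E), (640 : ℂ) • ((1 : A)) + (160 : ℂ) • (H) + (128 : ℂ) • (F * E) + (-32 : ℂ) • (H * H), (1728 : ℂ) • (F), (1152 : ℂ) • (F * F), (0 : A);
    (0 : A), (16 : ℂ) • (E * E), (192 : ℂ) • (E), (640 : ℂ) • ((1 : A)) + (-32 : ℂ) • (H) + (128 : ℂ) • (F * E) + (-32 : ℂ) • (H * H), (1792 : ℂ) • (F) + (-256 : ℂ) • (F * H), (640 : ℂ) • (F * F);
    (0 : A), (0 : A), (16 : ℂ) • (E * E), (224 : ℂ) • (E) + (-32 : ℂ) • (H * E), (640 : ℂ) • ((1 : A)) + (-256 : ℂ) • (H) + (64 : ℂ) • (F * E), (1280 : ℂ) • (F) + (-320 : ℂ) • (F * H);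
    (0 : A), (0 : A), (0 : A), (16 : ℂ) • (E * E), (256 : ℂ) • (E) + (-64 : ℂ) • (H * E), (640 : ℂ) • ((1 : A)) + (-512 : ℂ) • (H) + (-64 : ℂ) • (F * E) + (64 : ℂ) • (H * H)]
def Q3mat (F H E : A) : Matrix (Fin 6) (Fin 6) A :=
  !![(1152 : ℂ) • ((1 : A)) + (672 : ℂ) • (H) + (64 : ℂ) • (F * E) + (96 : ℂ) • (H * H), (960 : ℂ) • (F) + (320 : ℂ) • (F * H), (640 : ℂ) • (F * F), (0 : A), (0 : A), (0 : A);
    (192 : ℂ) • (E) + (64 : ℂ) • (H * E), (1152 : ℂ) • ((1 : A)) + (480 : ℂ) • (H) + (192 : ℂ) • (F * E) + (32 : ℂ) • (H * H), (1792 : ℂ) • (F) + (256 : ℂ) • (F * H), (1152 : ℂ) • (F * F), (0 : A), (0 : A);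
    (16 : ℂ) • (E * E), (224 : ℂ) • (E) + (32 : ℂ) • (H * E), (1152 : ℂ) • ((1 : A)) + (256 : ℂ) • (H) + (256 : ℂ) • (F * E), (2304 : ℂ) • (F), (1152 : ℂ) • (F * F), (0 : A);
    (0 : A), (16 : ℂ) • (E * E), (256 : ℂ) • (E), (1152 : ℂ) • ((1 : A)) + (256 : ℂ) • (F * E), (2304 : ℂ) • (F) + (-256 : ℂ) • (F * H), (640 : ℂ) • (F * F);
    (0 : A), (0 : A), (16 : ℂ) • (E * E), (288 : ℂ) • (E) + (-32 : ℂ) • (H * E), (1152 : ℂ) • ((1 : A)) + (-288 : ℂ) • (H) + (192 : ℂ) • (F * E) + (32 : ℂ) • (H * H), (1600 : ℂ) • (F) + (-320 : ℂ) • (F * H);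
    (0 : A), (0 : A), (0 : A), (16 : ℂ) • (E * E), (320 : ℂ) • (E) + (-64 : ℂ) • (H * E), (1152 : ℂ) • ((1 : A)) + (-608 : ℂ) • (H) + (64 : ℂ) • (F * E) + (96 : ℂ) • (H * H)]
def Rmat (F H E : A) : Matrix (Fin 6) (Fin 6) A :=
  !![(30720 : ℂ) • (F * (F * (E * E))), (61440 : ℂ) • (F * (F * E)) + (-61440 : ℂ) • (F * (F * (H * E))), (-61440 : ℂ) • (F * (F * H)) + (-122880 : ℂ) • (F * (F * (F * E))) + (61440 : ℂ) • (F * (F * (H * H))), (-368640 : ℂ) • (F * (F * F)) + (368640 : ℂ) • (F * (F * (F * H))), (737280 : ℂ) • (F * (F * (F * F))), (0 : A);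
    (12288 : ℂ) • (F * (E * E)) + (-12288 : ℂ) • (F * (H * (E * E))), (24576 : ℂ) • (F * E) + (-49152 : ℂ) • (F * (H * E)) + (6144 : ℂ) • (F * (F * (E * E))) + (24576 : ℂ) • (F * (H * (H * E))), (-24576 : ℂ) • (F * H) + (-122880 : ℂ) • (F * (F * E)) + (49152 : ℂ) • (F * (H * H)) + (24576 : ℂ) • (F * (F * (H * E))) + (-24576 : ℂ) • (F * (H * (H * H))), (-442368 : ℂ) • (F * F) + (552960 : ℂ) • (F * (F * H)) + (-73728 : ℂ) • (F * (F * (F * E))) + (-110592 : ℂ) • (F * (F * (H * H))), (1179648 : ℂ) • (F * (F * F)), (737280 : ℂ) • (F * (F * (F * F)));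
    (-1536 : ℂ) • (H * (E * E)) + (-3072 : ℂ) • (F * (E * (E * E))) + (1536 : ℂ) • (H * (H * (E * E))), (-3072 : ℂ) • (H * E) + (-15360 : ℂ) • (F * (E * E)) + (6144 : ℂ) • (H * (H * E)) + (3072 : ℂ) • (F * (H * (E * E))) + (-3072 : ℂ) • (H * (H * (H * E))), (-61440 : ℂ) • (F * E) + (3072 : ℂ) • (H * H) + (49152 : ℂ) • (F * (H * E)) + (-6144 : ℂ) • (H * (H * H)) + (12288 : ℂ) • (F * (F * (E * E))) + (3072 : ℂ) • (H * (H * (H * H))), (-110592 : ℂ) • (F) + (221184 : ℂ) • (F * H) + (-110592 : ℂ) • (F * (H * H)), (442368 : ℂ) • (F * F) + (110592 : ℂ) • (F * (F * H)) + (-73728 : ℂ) • (F * (F * (F * E))) + (-110592 : ℂ) • (F * (F * (H * H))), (1843200 : ℂ) • (F * (F * F)) + (-368640 : ℂ) • (F * (F * (F * H)));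
    (-1024 : ℂ) • (E * (E * E)) + (1024 : ℂ) • (H * (E * (E * E))), (-6144 : ℂ) • (E * E) + (7680 : ℂ) • (H * (E * E)) + (-1024 : ℂ) • (F * (E * (E * E))) + (-1536 : ℂ) • (H * (H * (E * E))), (-12288 : ℂ) • (E) + (24576 : ℂ) • (H * E) + (-12288 : ℂ) • (H * (H * E)), (12288 : ℂ) • (H) + (36864 : ℂ) • (F * E) + (-21504 : ℂ) • (H * H) + (6144 : ℂ) • (H * (H * H)) + (12288 : ℂ) • (F * (F * (E * E))) + (3072 : ℂ) • (H * (H * (H * H))), (122880 : ℂ) • (F * H) + (24576 : ℂ) • (F * (F * E)) + (-147456 : ℂ) • (F * (H * H)) + (-24576 : ℂ) • (F * (F * (H * E))) + (24576 : ℂ) • (F * (H * (H * H))), (1474560 : ℂ) • (F * F) + (-798720 : ℂ) • (F * (F * H)) + (-122880 : ℂ) • (F * (F * (F * E))) + (61440 : ℂ) • (F * (F * (H * H)));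
    (256 : ℂ) • (E * (E * (E * E))), (2048 : ℂ) • (E * (E * E)), (6144 : ℂ) • (E * E) + (1536 : ℂ) • (H * (E * E)) + (-1024 : ℂ) • (F * (E * (E * E))) + (-1536 : ℂ) • (H * (H * (E * E))), (15360 : ℂ) • (H * E) + (3072 : ℂ) • (F * (E * E)) + (-18432 : ℂ) • (H * (H * E)) + (-3072 : ℂ) • (F * (H * (E * E))) + (3072 : ℂ) • (H * (H * (H * E))), (12288 : ℂ) • (H) + (172032 : ℂ) • (F * E) + (-36864 : ℂ) • (H * H) + (-122880 : ℂ) • (F * (H * E)) + (24576 : ℂ) • (H * (H * H)) + (6144 : ℂ) • (F * (F * (E * E))) + (24576 : ℂ) • (F * (H * (H * E))), (368640 : ℂ) • (F) + (-491520 : ℂ) • (F * H) + (-307200 : ℂ) • (F * (F * E)) + (122880 : ℂ) • (F * (H * H)) + (61440 : ℂ) • (F * (F * (H * E)));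
    (0 : A), (256 : ℂ) • (E * (E * (E * E))), (5120 : ℂ) • (E * (E * E)) + (-1024 : ℂ) • (H * (E * (E * E))), (36864 : ℂ) • (E * E) + (-19968 : ℂ) • (H * (E * E)) + (-3072 : ℂ) • (F * (E * (E * E))) + (1536 : ℂ) • (H * (H * (E * E))), (73728 : ℂ) • (E) + (-98304 : ℂ) • (H * E) + (-61440 : ℂ) • (F * (E * E)) + (24576 : ℂ) • (H * (H * E)) + (12288 : ℂ) • (F * (H * (E * E))), (-61440 : ℂ) • (H) + (-245760 : ℂ) • (F * E) + (61440 : ℂ) • (H * H) + (122880 : ℂ) • (F * (H * E)) + (30720 : ℂ) • (F * (F * (E * E)))]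

theorem aux_matrix_identity (F H E : A)
    (hEF : E * F = F * E + H)
    (hHF : H * F = F * H - (2:ℂ) • F)
    (hEH : E * H = H * E - (2:ℂ) • E) :
    (Nmat F H E ^ 2 + 20 * Nmat F H E - 100 * Cmat F H E) *
      (Nmat F H E ^ 2 + 52 * Nmat F H E - 36 * Cmat F H E + 640) *
      (Nmat F H E ^ 2 + 68 * Nmat F H E - 4 * Cmat F H E + 1152) = 0 := by
  have hEF' : ∀ a : A, E * (F * a) = F * (E * a) + H * a := fun a => by
    rw [← mul_assoc, hEF, add_mul, mul_assoc]
  have hHF' : ∀ a : A, H * (F * a) = F * (H * a) - (2:ℂ) • (F * a) := fun a => by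
    rw [← mul_assoc, hHF, sub_mul, mul_assoc, smul_mul_assoc]
  have hEH' : ∀ a : A, E * (H * a) = H * (E * a) - (2:ℂ) • (E * a) := fun a => by
    rw [← mul_assoc, hEH, sub_mul, mul_assoc, smul_mul_assoc]
  have c20 : (20 : Matrix (Fin 6) (Fin 6) A) * Nmat F H E = (20:ℂ) • Nmat F H E := by
    rw [Algebra.smul_def, map_ofNat]
  have c52 : (52 : Matrix (Fin 6) (Fin 6) A) * Nmat F H E = (52:ℂ) • Nmat F H E := by
    rw [Algebra.smul_def, map_ofNat]
  have c68 : (68 : Matrix (Fin 6) (Fin 6) A) * Nmat F H E = (68:ℂ) • Nmat F H E := by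
    rw [Algebra.smul_def, map_ofNat]
  have c100 : (100 : Matrix (Fin 6) (Fin 6) A) * Cmat F H E = (100:ℂ) • Cmat F H E := by
    rw [Algebra.smul_def, map_ofNat]
  have c36 : (36 : Matrix (Fin 6) (Fin 6) A) * Cmat F H E = (36:ℂ) • Cmat F H E := by
    rw [Algebra.smul_def, map_ofNat]
  have c4 : (4 : Matrix (Fin 6) (Fin 6) A) * Cmat F H E = (4:ℂ) • Cmat F H E := by
    rw [Algebra.smul_def, map_ofNat]
  have c640 : (640 : Matrix (Fin 6) (Fin 6) A) = (640:ℂ) • (Imat6 : Matrix (Fin 6) (Fin 6) A) := by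
    rw [Imat6_eq_one, Algebra.smul_def, map_ofNat, mul_one]
  have c1152 : (1152 : Matrix (Fin 6) (Fin 6) A) = (1152:ℂ) • (Imat6 : Matrix (Fin 6) (Fin 6) A) := by
    rw [Imat6_eq_one, Algebra.smul_def, map_ofNat, mul_one]
  have hS : Nmat F H E * Nmat F H E = Smat F H E := by
    ext i j
    fin_cases i <;> fin_cases j <;>
      (simp only [Nmat, Cmat, Smat, Q1mat, Q2mat, Q3mat, Rmat, Imat6,
        Matrix.mul_apply, Matrix.add_apply, Matrix.sub_apply, Matrix.smul_apply,
        Matrix.zero_apply, Matrix.of_apply, Fin.sum_univ_six,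
        vec6_0, vec6_1, vec6_2, vec6_3, vec6_4, vec6_5, vec6_0', vec6_1', vec6_2', vec6_3', vec6_4', vec6_5',
        mul_zero, zero_mul, add_zero, zero_add, smul_zero, zero_smul,
        mul_add, add_mul, mul_sub, sub_mul, smul_mul_assoc, mul_smul_comm,
        smul_add, smul_sub, smul_smul, mul_assoc, one_mul, mul_one,
        hEF', hHF', hEH', hEF, hHF, hEH] <;>
       (try simp only [mul_assoc, smul_smul]) <;> (try module))
  have hQ1 : Smat F H E + (20:ℂ) • Nmat F H E - (100:ℂ) • Cmat F H E = Q1mat F H E := by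
    ext i j
    fin_cases i <;> fin_cases j <;>
      (simp only [Nmat, Cmat, Smat, Q1mat, Q2mat, Q3mat, Rmat, Imat6,
        Matrix.mul_apply, Matrix.add_apply, Matrix.sub_apply, Matrix.smul_apply,
        Matrix.zero_apply, Matrix.of_apply, Fin.sum_univ_six,
        vec6_0, vec6_1, vec6_2, vec6_3, vec6_4, vec6_5, vec6_0', vec6_1', vec6_2', vec6_3', vec6_4', vec6_5',
        mul_zero, zero_mul, add_zero, zero_add, smul_zero, zero_smul,
        mul_add, add_mul, mul_sub, sub_mul, smul_mul_assoc, mul_smul_comm,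
        smul_add, smul_sub, smul_smul, mul_assoc, one_mul, mul_one,
        hEF', hHF', hEH', hEF, hHF, hEH] <;>
       (try simp only [mul_assoc, smul_smul]) <;> (try module))
  have hQ2 : Smat F H E + (52:ℂ) • Nmat F H E - (36:ℂ) • Cmat F H E
      + (640:ℂ) • (Imat6 : Matrix (Fin 6) (Fin 6) A) = Q2mat F H E := by
    ext i j
    fin_cases i <;> fin_cases j <;>
      (simp only [Nmat, Cmat, Smat, Q1mat, Q2mat, Q3mat, Rmat, Imat6,
        Matrix.mul_apply, Matrix.add_apply, Matrix.sub_apply, Matrix.smul_apply,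
        Matrix.zero_apply, Matrix.of_apply, Fin.sum_univ_six,
        vec6_0, vec6_1, vec6_2, vec6_3, vec6_4, vec6_5, vec6_0', vec6_1', vec6_2', vec6_3', vec6_4', vec6_5',
        mul_zero, zero_mul, add_zero, zero_add, smul_zero, zero_smul,
        mul_add, add_mul, mul_sub, sub_mul, smul_mul_assoc, mul_smul_comm,
        smul_add, smul_sub, smul_smul, mul_assoc, one_mul, mul_one,
        hEF', hHF', hEH', hEF, hHF, hEH] <;>
       (try simp only [mul_assoc, smul_smul]) <;> (try module))
  have hQ3 : Smat F H E + (68:ℂ) • Nmat F H E - (4:ℂ) • Cmat F H E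
      + (1152:ℂ) • (Imat6 : Matrix (Fin 6) (Fin 6) A) = Q3mat F H E := by
    ext i j
    fin_cases i <;> fin_cases j <;>
      (simp only [Nmat, Cmat, Smat, Q1mat, Q2mat, Q3mat, Rmat, Imat6,
        Matrix.mul_apply, Matrix.add_apply, Matrix.sub_apply, Matrix.smul_apply,
        Matrix.zero_apply, Matrix.of_apply, Fin.sum_univ_six,
        vec6_0, vec6_1, vec6_2, vec6_3, vec6_4, vec6_5, vec6_0', vec6_1', vec6_2', vec6_3', vec6_4', vec6_5',
        mul_zero, zero_mul, add_zero, zero_add, smul_zero, zero_smul,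
        mul_add, add_mul, mul_sub, sub_mul, smul_mul_assoc, mul_smul_comm,
        smul_add, smul_sub, smul_smul, mul_assoc, one_mul, mul_one,
        hEF', hHF', hEH', hEF, hHF, hEH] <;>
       (try simp only [mul_assoc, smul_smul]) <;> (try module))
  have hR : Q1mat F H E * Q2mat F H E = Rmat F H E := by
    ext i j
    fin_cases i <;> fin_cases j <;>
      (simp only [Nmat, Cmat, Smat, Q1mat, Q2mat, Q3mat, Rmat, Imat6,
        Matrix.mul_apply, Matrix.add_apply, Matrix.sub_apply, Matrix.smul_apply,
        Matrix.zero_apply, Matrix.of_apply, Fin.sum_univ_six,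
        vec6_0, vec6_1, vec6_2, vec6_3, vec6_4, vec6_5, vec6_0', vec6_1', vec6_2', vec6_3', vec6_4', vec6_5',
        mul_zero, zero_mul, add_zero, zero_add, smul_zero, zero_smul,
        mul_add, add_mul, mul_sub, sub_mul, smul_mul_assoc, mul_smul_comm,
        smul_add, smul_sub, smul_smul, mul_assoc, one_mul, mul_one,
        hEF', hHF', hEH', hEF, hHF, hEH] <;>
       (try simp only [mul_assoc, smul_smul]) <;> (try module))
  have hZ : Rmat F H E * Q3mat F H E = 0 := by
    ext i j
    fin_cases i <;> fin_cases j <;>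
      (simp only [Nmat, Cmat, Smat, Q1mat, Q2mat, Q3mat, Rmat, Imat6,
        Matrix.mul_apply, Matrix.add_apply, Matrix.sub_apply, Matrix.smul_apply,
        Matrix.zero_apply, Matrix.of_apply, Fin.sum_univ_six,
        vec6_0, vec6_1, vec6_2, vec6_3, vec6_4, vec6_5, vec6_0', vec6_1', vec6_2', vec6_3', vec6_4', vec6_5',
        mul_zero, zero_mul, add_zero, zero_add, smul_zero, zero_smul,
        mul_add, add_mul, mul_sub, sub_mul, smul_mul_assoc, mul_smul_comm,
        smul_add, smul_sub, smul_smul, mul_assoc, one_mul, mul_one,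
        hEF', hHF', hEH', hEF, hHF, hEH] <;>
       (try simp only [mul_assoc, smul_smul]) <;> (try module))
  simp only [pow_two]
  rw [hS, c20, c52, c68, c100, c36, c4, c640, c1152, hQ1, hQ2, hQ3, hR, hZ]

end AuxMat

noncomputable def ΦUE : (UniversalEnvelopingAlgebra ℂ (sl (Fin 2) ℂ)) ⊗[ℂ] (Module.End ℂ (Fin 6 → ℂ)) ≃ₐ[ℂ]
    Matrix (Fin 6) (Fin 6) (UniversalEnvelopingAlgebra ℂ (sl (Fin 2) ℂ)) :=
  (Algebra.TensorProduct.congr AlgEquiv.refl LinearMap.toMatrixAlgEquiv').trans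
    (matrixEquivTensor (Fin 6) ℂ (UniversalEnvelopingAlgebra ℂ (sl (Fin 2) ℂ))).symm

lemma ΦUE_tmul (u : UniversalEnvelopingAlgebra ℂ (sl (Fin 2) ℂ)) (m : Matrix (Fin 6) (Fin 6) ℂ) :
    ΦUE (u ⊗ₜ[ℂ] Matrix.toLin' m) = Matrix.of (fun i j => m i j • u) := by
  have hTM : (LinearMap.toMatrixAlgEquiv' (Matrix.toLin' m)) = m := LinearMap.toMatrix'_toLin' m
  rw [ΦUE, AlgEquiv.trans_apply]
  simp only [Algebra.TensorProduct.congr_apply, Algebra.TensorProduct.map_tmul]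
  change (matrixEquivTensor (Fin 6) ℂ (UniversalEnvelopingAlgebra ℂ (sl (Fin 2) ℂ))).symm (u ⊗ₜ[ℂ] LinearMap.toMatrixAlgEquiv' (Matrix.toLin' m)) = _
  rw [hTM]
  rw [matrixEquivTensor_apply_symm]
  ext i j
  simp only [AlgEquiv.toAlgHom_eq_coe, AlgHom.coe_coe, AlgEquiv.coe_refl, id_eq, hTM,
    Matrix.map_apply, Matrix.of_apply, Matrix.smul_apply, smul_eq_mul]
  rw [← Algebra.commutes, ← Algebra.smul_def]

lemma endOne_eq : (1 : Module.End ℂ (Fin 6 → ℂ)) = Matrix.toLin' (1 : Matrix (Fin 6) (Fin 6) ℂ) := by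
  rw [Matrix.toLin'_one]; rfl



theorem minimal_polynomial_of_M_operator_sl2_weight5
    (e f h : sl (Fin 2) ℂ)
    (he : (e : Matrix (Fin 2) (Fin 2) ℂ) = !![0, 1; 0, 0])
    (hf : (f : Matrix (Fin 2) (Fin 2) ℂ) = !![0, 0; 1, 0])
    (hh : (h : Matrix (Fin 2) (Fin 2) ℂ) = !![1, 0; 0, -1])
    (C₂ : UniversalEnvelopingAlgebra ℂ (sl (Fin 2) ℂ))
    (hC₂ : C₂ = ι ℂ h * ι ℂ h + 2 * ι ℂ h + 4 * ι ℂ f * ι ℂ e)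
    -- `π : U(sl₂(ℂ)) → End(ℂ⁶)` induced by the 6-dimensional irreducible representation
    -- of highest weight 5, in the basis `v₀, …, v₅`
    (π : UniversalEnvelopingAlgebra ℂ (sl (Fin 2) ℂ) →ₐ[ℂ] Module.End ℂ (Fin 6 → ℂ))
    (hπh : π (ι ℂ h) = Matrix.toLin' (Matrix.diagonal ![5, 3, 1, -1, -3, -5]))
    (hπf : π (ι ℂ f) = Matrix.toLin'
      (Matrix.of fun i j : Fin 6 => if (i : ℕ) = (j : ℕ) + 1 then (1 : ℂ) else 0))
    (hπe : π (ι ℂ e) = Matrix.toLin'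
      (Matrix.of fun i j : Fin 6 =>
        if (j : ℕ) = (i : ℕ) + 1 then (((j : ℕ) * (6 - (j : ℕ)) : ℕ) : ℂ) else 0))
    -- `δ : U(sl₂(ℂ)) → U(sl₂(ℂ)) ⊗ End(ℂ⁶)` with `δ(x) = x ⊗ 1 + 1 ⊗ π(x)` for `x ∈ sl₂(ℂ)`
    (δ : UniversalEnvelopingAlgebra ℂ (sl (Fin 2) ℂ) →ₐ[ℂ]
      (UniversalEnvelopingAlgebra ℂ (sl (Fin 2) ℂ) ⊗[ℂ] Module.End ℂ (Fin 6 → ℂ)))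
    (hδ : ∀ x : sl (Fin 2) ℂ, δ (ι ℂ x) =
      (ι ℂ x) ⊗ₜ[ℂ] (1 : Module.End ℂ (Fin 6 → ℂ)) + 1 ⊗ₜ[ℂ] π (ι ℂ x))
    -- `C = C₂ ⊗ 1` and `M₁ = δ(C₂) − C₂ ⊗ 1 − 35`
    (C M₁ : UniversalEnvelopingAlgebra ℂ (sl (Fin 2) ℂ) ⊗[ℂ] Module.End ℂ (Fin 6 → ℂ))
    (hC : C = C₂ ⊗ₜ[ℂ] (1 : Module.End ℂ (Fin 6 → ℂ)))
    (hM₁ : M₁ = δ C₂ - C₂ ⊗ₜ[ℂ] (1 : Module.End ℂ (Fin 6 → ℂ)) - 35) :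
    (M₁ ^ 2 + 20 * M₁ - 100 * C) * (M₁ ^ 2 + 52 * M₁ - 36 * C + 640) *
      (M₁ ^ 2 + 68 * M₁ - 4 * C + 1152) = 0 := by
  have bef : ⁅e, f⁆ = h := by
    apply Subtype.ext
    show (↑⁅e, f⁆ : Matrix (Fin 2) (Fin 2) ℂ) = (h : Matrix (Fin 2) (Fin 2) ℂ)
    letI : LieRing (Matrix (Fin 2) (Fin 2) ℂ) := LieRing.ofAssociativeRing
    rw [LieSubalgebra.coe_bracket, Ring.lie_def, he, hf, hh]
    ext i j
    fin_cases i <;> fin_cases j <;> norm_num [Matrix.mul_apply, Fin.sum_univ_two]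
  have bhf : ⁅h, f⁆ = (-2:ℂ) • f := by
    apply Subtype.ext
    show (↑⁅h, f⁆ : Matrix (Fin 2) (Fin 2) ℂ) = (-2:ℂ) • (f : Matrix (Fin 2) (Fin 2) ℂ)
    letI : LieRing (Matrix (Fin 2) (Fin 2) ℂ) := LieRing.ofAssociativeRing
    rw [LieSubalgebra.coe_bracket, Ring.lie_def, hf, hh]
    ext i j
    fin_cases i <;> fin_cases j <;> norm_num [Matrix.mul_apply, Fin.sum_univ_two]
  have bhe : ⁅h, e⁆ = (2:ℂ) • e := by
    apply Subtype.ext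
    show (↑⁅h, e⁆ : Matrix (Fin 2) (Fin 2) ℂ) = (2:ℂ) • (e : Matrix (Fin 2) (Fin 2) ℂ)
    letI : LieRing (Matrix (Fin 2) (Fin 2) ℂ) := LieRing.ofAssociativeRing
    rw [LieSubalgebra.coe_bracket, Ring.lie_def, he, hh]
    ext i j
    fin_cases i <;> fin_cases j <;> norm_num [Matrix.mul_apply, Fin.sum_univ_two]
  have rEF : ι ℂ e * ι ℂ f = ι ℂ f * ι ℂ e + ι ℂ h := by
    letI : LieRing (UniversalEnvelopingAlgebra ℂ (sl (Fin 2) ℂ)) := LieRing.ofAssociativeRing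
    have h1 := (ι ℂ (L := sl (Fin 2) ℂ)).map_lie e f
    rw [bef, Ring.lie_def] at h1
    have h2 := h1.symm
    rw [sub_eq_iff_eq_add] at h2
    rw [h2]; module
  have rHF : ι ℂ h * ι ℂ f = ι ℂ f * ι ℂ h - (2:ℂ) • ι ℂ f := by
    letI : LieRing (UniversalEnvelopingAlgebra ℂ (sl (Fin 2) ℂ)) := LieRing.ofAssociativeRing
    have h1 := (ι ℂ (L := sl (Fin 2) ℂ)).map_lie h f
    rw [bhf, Ring.lie_def, map_smul] at h1
    have h2 := h1.symm
    rw [sub_eq_iff_eq_add] at h2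
    rw [h2]; module
  have rEH : ι ℂ e * ι ℂ h = ι ℂ h * ι ℂ e - (2:ℂ) • ι ℂ e := by
    letI : LieRing (UniversalEnvelopingAlgebra ℂ (sl (Fin 2) ℂ)) := LieRing.ofAssociativeRing
    have h1 := (ι ℂ (L := sl (Fin 2) ℂ)).map_lie h e
    rw [bhe, Ring.lie_def, map_smul] at h1
    have h2 := h1.symm
    rw [sub_eq_iff_eq_add] at h2
    rw [h2]; module
  have hC₂' : C₂ = ι ℂ h * ι ℂ h + (2:ℂ) • ι ℂ h + (4:ℂ) • (ι ℂ f * ι ℂ e) := by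
    rw [hC₂, Algebra.smul_def, Algebra.smul_def, map_ofNat, map_ofNat, mul_assoc]
  have m35 : (35 : Matrix (Fin 6) (Fin 6) (UniversalEnvelopingAlgebra ℂ (sl (Fin 2) ℂ)))
      = (35:ℂ) • (Imat6 : Matrix (Fin 6) (Fin 6) (UniversalEnvelopingAlgebra ℂ (sl (Fin 2) ℂ))) := by
    rw [Imat6_eq_one, Algebra.smul_def, map_ofNat, mul_one]
  have hd_eq : Matrix.diagonal ![(5:ℂ), 3, 1, -1, -3, -5]
      = !![(5:ℂ),0,0,0,0,0; 0,3,0,0,0,0; 0,0,1,0,0,0; 0,0,0,-1,0,0; 0,0,0,0,-3,0; 0,0,0,0,0,-5] := by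
    ext i j
    fin_cases i <;> fin_cases j <;> (first | rfl | norm_num [Matrix.diagonal_apply])
  have mf_eq : (Matrix.of fun i j : Fin 6 => if (i : ℕ) = (j : ℕ) + 1 then (1 : ℂ) else 0)
      = !![(0:ℂ),0,0,0,0,0; 1,0,0,0,0,0; 0,1,0,0,0,0; 0,0,1,0,0,0; 0,0,0,1,0,0; 0,0,0,0,1,0] := by
    ext i j
    fin_cases i <;> fin_cases j <;> (first | rfl | norm_num)
  have me_eq : (Matrix.of fun i j : Fin 6 =>
        if (j : ℕ) = (i : ℕ) + 1 then (((j : ℕ) * (6 - (j : ℕ)) : ℕ) : ℂ) else 0)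
      = !![(0:ℂ),5,0,0,0,0; 0,0,8,0,0,0; 0,0,0,9,0,0; 0,0,0,0,8,0; 0,0,0,0,0,5; 0,0,0,0,0,0] := by
    ext i j
    fin_cases i <;> fin_cases j <;> (first | rfl | norm_num)
  have one_eq6 : (1 : Matrix (Fin 6) (Fin 6) ℂ)
      = !![(1:ℂ),0,0,0,0,0; 0,1,0,0,0,0; 0,0,1,0,0,0; 0,0,0,1,0,0; 0,0,0,0,1,0; 0,0,0,0,0,1] := by
    ext i j
    fin_cases i <;> fin_cases j <;> (first | rfl | norm_num [Matrix.one_apply])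
  have hCm : ΦUE (C₂ ⊗ₜ[ℂ] (1 : Module.End ℂ (Fin 6 → ℂ)))
      = Cmat (ι ℂ f) (ι ℂ h) (ι ℂ e) := by
    rw [hC₂', endOne_eq, one_eq6, ΦUE_tmul]
    ext i j
    fin_cases i <;> fin_cases j <;>
      (simp only [Cmat, Matrix.of_apply, vec6_0, vec6_1, vec6_2, vec6_3, vec6_4, vec6_5, vec6_0', vec6_1', vec6_2', vec6_3', vec6_4', vec6_5',
        one_smul, zero_smul, smul_zero, smul_add, smul_smul] <;> try module)
  have hDh : ΦUE (δ (ι ℂ h)) =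
      !![ι ℂ h + (5:ℂ) • (1 : UniversalEnvelopingAlgebra ℂ (sl (Fin 2) ℂ)), 0, 0, 0, 0, 0;
         0, ι ℂ h + (3:ℂ) • 1, 0, 0, 0, 0;
         0, 0, ι ℂ h + (1:ℂ) • 1, 0, 0, 0;
         0, 0, 0, ι ℂ h + (-1:ℂ) • 1, 0, 0;
         0, 0, 0, 0, ι ℂ h + (-3:ℂ) • 1, 0;
         0, 0, 0, 0, 0, ι ℂ h + (-5:ℂ) • 1] := by
    rw [hδ h, hπh, hd_eq, endOne_eq, one_eq6, map_add, ΦUE_tmul, ΦUE_tmul]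
    ext i j
    fin_cases i <;> fin_cases j <;>
      (simp only [Matrix.add_apply, Matrix.of_apply, vec6_0, vec6_1, vec6_2, vec6_3, vec6_4, vec6_5, vec6_0', vec6_1', vec6_2', vec6_3', vec6_4', vec6_5',
        one_smul, zero_smul, add_zero, zero_add, smul_zero] <;> try module)
  have hDf : ΦUE (δ (ι ℂ f)) =
      !![ι ℂ f, 0, 0, 0, 0, 0;
         (1 : UniversalEnvelopingAlgebra ℂ (sl (Fin 2) ℂ)), ι ℂ f, 0, 0, 0, 0;
         0, 1, ι ℂ f, 0, 0, 0;
         0, 0, 1, ι ℂ f, 0, 0;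
         0, 0, 0, 1, ι ℂ f, 0;
         0, 0, 0, 0, 1, ι ℂ f] := by
    rw [hδ f, hπf, mf_eq, endOne_eq, one_eq6, map_add, ΦUE_tmul, ΦUE_tmul]
    ext i j
    fin_cases i <;> fin_cases j <;>
      (simp only [Matrix.add_apply, Matrix.of_apply, vec6_0, vec6_1, vec6_2, vec6_3, vec6_4, vec6_5, vec6_0', vec6_1', vec6_2', vec6_3', vec6_4', vec6_5',
        one_smul, zero_smul, add_zero, zero_add, smul_zero] <;> try module)
  have hDe : ΦUE (δ (ι ℂ e)) =
      !![ι ℂ e, (5:ℂ) • (1 : UniversalEnvelopingAlgebra ℂ (sl (Fin 2) ℂ)), 0, 0, 0, 0;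
         0, ι ℂ e, (8:ℂ) • 1, 0, 0, 0;
         0, 0, ι ℂ e, (9:ℂ) • 1, 0, 0;
         0, 0, 0, ι ℂ e, (8:ℂ) • 1, 0;
         0, 0, 0, 0, ι ℂ e, (5:ℂ) • 1;
         0, 0, 0, 0, 0, ι ℂ e] := by
    rw [hδ e, hπe, me_eq, endOne_eq, one_eq6, map_add, ΦUE_tmul, ΦUE_tmul]
    ext i j
    fin_cases i <;> fin_cases j <;>
      (simp only [Matrix.add_apply, Matrix.of_apply, vec6_0, vec6_1, vec6_2, vec6_3, vec6_4, vec6_5, vec6_0', vec6_1', vec6_2', vec6_3', vec6_4', vec6_5',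
        one_smul, zero_smul, add_zero, zero_add, smul_zero] <;> try module)
  have hδC : ΦUE (δ C₂) = Nmat (ι ℂ f) (ι ℂ h) (ι ℂ e)
      + Cmat (ι ℂ f) (ι ℂ h) (ι ℂ e) + 35 := by
    rw [hC₂']
    simp only [map_add, map_mul, map_smul]
    rw [hDh, hDf, hDe, m35]
    ext i j
    fin_cases i <;> fin_cases j <;>
      (simp only [Nmat, Cmat, Imat6, Matrix.mul_apply, Matrix.add_apply, Matrix.smul_apply,
        Matrix.of_apply, Fin.sum_univ_six, vec6_0, vec6_1, vec6_2, vec6_3, vec6_4, vec6_5, vec6_0', vec6_1', vec6_2', vec6_3', vec6_4', vec6_5',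
        mul_zero, zero_mul, add_zero, zero_add, smul_zero, zero_smul, one_smul,
        mul_add, add_mul, smul_mul_assoc, mul_smul_comm,
        smul_add, smul_smul, mul_assoc, one_mul, mul_one] <;>
       (try simp only [mul_assoc, smul_smul]) <;> (try module))
  rw [hC, hM₁]
  apply ΦUE.injective
  rw [map_zero]
  simp only [map_mul, map_add, map_sub, map_pow, map_ofNat]
  rw [hδC, hCm]
  rw [show Nmat (ι ℂ f) (ι ℂ h) (ι ℂ e) + Cmat (ι ℂ f) (ι ℂ h) (ι ℂ e) + 35
      - Cmat (ι ℂ f) (ι ℂ h) (ι ℂ e) - 35 = Nmat (ι ℂ f) (ι ℂ h) (ι ℂ e) from by abel]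
  exact aux_matrix_identity (ι ℂ f) (ι ℂ h) (ι ℂ e) rEF rHF rEH
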